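/- For every integer n ≥ 2, the total 3-rainbow domination number of the Cartesian product P₂ □ P_n of directed paths satisfies γ_tr3(P₂ □ P_n) = 2n. -/

import Mathlib

open Finset

/-- No isolated vertex: every vertex has an in-neighbor or an out-neighbor. -/
def NoIsolated {V : Type*} (Adj : V → V → Prop) : Prop :=
  ∀ v, ∃ u, Adj u v ∨ Adj v u

/-- A `k`-rainbow dominating function on a digraph. -/
def IsKRDF {V : Type*} (k : ℕ) (Adj : V → V → Prop) (f : V → Finset (Fin k)) : Prop :=
  ∀ v, f v = ∅ → ∀ c : Fin k, ∃ u, Adj u v ∧ c ∈ f u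

/-- A total `k`-rainbow dominating function on a digraph. -/
def IsTkRDF {V : Type*} (k : ℕ) (Adj : V → V → Prop) (f : V → Finset (Fin k)) : Prop :=
  IsKRDF k Adj f ∧
    ∀ v, f v ≠ ∅ → ∃ u, u ≠ v ∧ f u ≠ ∅ ∧ (Adj u v ∨ Adj v u)

/-- The `k`-rainbow domination number. -/
noncomputable def krdNum {V : Type*} [Fintype V] (k : ℕ) (Adj : V → V → Prop) : ℕ :=
  sInf {w | ∃ f : V → Finset (Fin k), IsKRDF k Adj f ∧ ∑ v, (f v).card = w}

/-- The total `k`-rainbow domination number. -/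
noncomputable def tkRainbow {V : Type*} [Fintype V] (k : ℕ) (Adj : V → V → Prop) : ℕ :=
  sInf {w | ∃ f : V → Finset (Fin k), IsTkRDF k Adj f ∧ ∑ v, (f v).card = w}

/-- A dominating set of a digraph. -/
def IsDomSet {V : Type*} (Adj : V → V → Prop) (S : Finset V) : Prop :=
  ∀ v, v ∉ S → ∃ u ∈ S, Adj u v

/-- The domination number. -/
noncomputable def domNum {V : Type*} [Fintype V] (Adj : V → V → Prop) : ℕ :=
  sInf {m | ∃ S : Finset V, IsDomSet Adj S ∧ S.card = m}

/-- A total dominating set of a digraph. -/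
def IsTDSet {V : Type*} (Adj : V → V → Prop) (S : Finset V) : Prop :=
  IsDomSet Adj S ∧ ∀ v ∈ S, ∃ u ∈ S, u ≠ v ∧ (Adj u v ∨ Adj v u)

/-- The total domination number. -/
noncomputable def totalDomNum {V : Type*} [Fintype V] (Adj : V → V → Prop) : ℕ :=
  sInf {m | ∃ S : Finset V, IsTDSet Adj S ∧ S.card = m}

/-- The underlying (undirected) simple graph of a digraph. -/
def underlying {V : Type*} (Adj : V → V → Prop) : SimpleGraph V where
  Adj u v := u ≠ v ∧ (Adj u v ∨ Adj v u)
  symm := ⟨fun u v ⟨h1, h2⟩ => ⟨h1.symm, h2.symm⟩⟩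
  loopless := ⟨fun v h => h.1 rfl⟩

/-- Maximum out-degree. -/
noncomputable def maxOutDeg {V : Type*} [Fintype V] (Adj : V → V → Prop) : ℕ :=
  Finset.univ.sup fun v => Nat.card {u | Adj v u}

/-- Maximum in-degree. -/
noncomputable def maxInDeg {V : Type*} [Fintype V] (Adj : V → V → Prop) : ℕ :=
  Finset.univ.sup fun v => Nat.card {u | Adj u v}

/-- The Cartesian product `P_m □ P_n` of two directed paths. -/
def pathProdAdj (m n : ℕ) : Fin m × Fin n → Fin m × Fin n → Prop :=
  fun p q => (p.1 = q.1 ∧ (p.2 : ℕ) + 1 = (q.2 : ℕ)) ∨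
    (p.2 = q.2 ∧ (p.1 : ℕ) + 1 = (q.1 : ℕ))


/-- Potential function for the column induction. -/
def Phi (s t u v : ℕ) : ℕ :=
  if u = 3 ∧ v = 3 then 2
  else if (1 ≤ u ∧ 2 ≤ v) ∨ (u = 3 ∧ v = 1) ∨ (u = 0 ∧ 2 ≤ v ∧ 1 ≤ t)
      ∨ (u = 3 ∧ v = 0 ∧ 1 ≤ s) then 1
  else 0

lemma phi_step_fin : ∀ s t u v x y : Fin 4,
    ((x : ℕ) = 0 → (u : ℕ) = 3) → ((y : ℕ) = 0 → 3 ≤ (x : ℕ) + (v : ℕ)) →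
    (1 ≤ (u : ℕ) → 1 ≤ (v : ℕ) ∨ 1 ≤ (s : ℕ) ∨ 1 ≤ (x : ℕ)) →
    (1 ≤ (v : ℕ) → 1 ≤ (u : ℕ) ∨ 1 ≤ (t : ℕ) ∨ 1 ≤ (y : ℕ)) →
    2 + Phi u v x y ≤ Phi s t u v + ((x : ℕ) + (y : ℕ)) := by decide

lemma phi_base_fin : ∀ s t u v : Fin 4,
    1 ≤ (s : ℕ) → ((t : ℕ) = 0 → 3 ≤ (s : ℕ)) → ((u : ℕ) = 0 → (s : ℕ) = 3) →
    ((v : ℕ) = 0 → 3 ≤ (u : ℕ) + (t : ℕ)) →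
    (1 ≤ (s : ℕ) → 1 ≤ (t : ℕ) ∨ 1 ≤ (u : ℕ)) →
    (1 ≤ (t : ℕ) → 1 ≤ (s : ℕ) ∨ 1 ≤ (v : ℕ)) →
    4 + Phi s t u v ≤ (s : ℕ) + (t : ℕ) + (u : ℕ) + (v : ℕ) := by decide

lemma phi_step (s t u v x y : ℕ) (hs : s ≤ 3) (ht : t ≤ 3) (hu : u ≤ 3) (hv : v ≤ 3)
    (hx : x ≤ 3) (hy : y ≤ 3)
    (h1 : x = 0 → u = 3) (h2 : y = 0 → 3 ≤ x + v)
    (h3 : 1 ≤ u → 1 ≤ v ∨ 1 ≤ s ∨ 1 ≤ x)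
    (h4 : 1 ≤ v → 1 ≤ u ∨ 1 ≤ t ∨ 1 ≤ y) :
    2 + Phi u v x y ≤ Phi s t u v + (x + y) :=
  phi_step_fin ⟨s, by omega⟩ ⟨t, by omega⟩ ⟨u, by omega⟩ ⟨v, by omega⟩ ⟨x, by omega⟩
    ⟨y, by omega⟩ h1 h2 h3 h4

lemma phi_base (s t u v : ℕ) (hs : s ≤ 3) (ht : t ≤ 3) (hu : u ≤ 3) (hv : v ≤ 3)
    (h0 : 1 ≤ s) (h1 : t = 0 → 3 ≤ s) (h2 : u = 0 → s = 3) (h3 : v = 0 → 3 ≤ u + t)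
    (h4 : 1 ≤ s → 1 ≤ t ∨ 1 ≤ u) (h5 : 1 ≤ t → 1 ≤ s ∨ 1 ≤ v) :
    4 + Phi s t u v ≤ s + t + u + v :=
  phi_base_fin ⟨s, by omega⟩ ⟨t, by omega⟩ ⟨u, by omega⟩ ⟨v, by omega⟩ h0 h1 h2 h3 h4 h5

/-- Card of the top-row label in column `j`. -/
def colA (n : ℕ) (f : Fin 2 × Fin n → Finset (Fin 3)) (j : ℕ) : ℕ :=
  if h : j < n then (f (0, ⟨j, h⟩)).card else 0

/-- Card of the bottom-row label in column `j`. -/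
def colB (n : ℕ) (f : Fin 2 × Fin n → Finset (Fin 3)) (j : ℕ) : ℕ :=
  if h : j < n then (f (1, ⟨j, h⟩)).card else 0

section Lemmas
variable {n : ℕ} {f : Fin 2 × Fin n → Finset (Fin 3)}

lemma colA_le3 (j : ℕ) : colA n f j ≤ 3 := by
  unfold colA; split
  · exact (Finset.card_le_card (Finset.subset_univ _)).trans (by simp)
  · omega

lemma colB_le3 (j : ℕ) : colB n f j ≤ 3 := by
  unfold colB; split
  · exact (Finset.card_le_card (Finset.subset_univ _)).trans (by simp)
  · omega

lemma lemA0 (hf : IsKRDF 3 (pathProdAdj 2 n) f) (h0 : 0 < n) : 1 ≤ colA n f 0 := by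
  unfold colA; rw [dif_pos h0]
  by_contra hc
  have hv : f (0, ⟨0, h0⟩) = ∅ := Finset.card_eq_zero.mp (by omega)
  obtain ⟨u, hadj, -⟩ := hf _ hv 0
  obtain ⟨u1, u2⟩ := u
  rcases hadj with ⟨-, h2⟩ | ⟨-, h2⟩
  · have h2' : (u2 : ℕ) + 1 = 0 := h2
    omega
  · have h2' : (u1 : ℕ) + 1 = 0 := h2
    omega

lemma lemB0 (hf : IsKRDF 3 (pathProdAdj 2 n) f) (h0 : 0 < n) (hb : colB n f 0 = 0) :
    3 ≤ colA n f 0 := by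
  unfold colA colB at *; rw [dif_pos h0] at hb ⊢
  have hv : f (1, ⟨0, h0⟩) = ∅ := Finset.card_eq_zero.mp hb
  have hmem : ∀ c : Fin 3, c ∈ f (0, ⟨0, h0⟩) := by
    intro c
    obtain ⟨u, hadj, hc⟩ := hf _ hv c
    obtain ⟨u1, u2⟩ := u
    rcases hadj with ⟨-, h2⟩ | ⟨h1, h2⟩
    · have h2' : (u2 : ℕ) + 1 = 0 := h2
      omega
    · have h2' : (u1 : ℕ) + 1 = 1 := h2
      have e1 : u1 = (0 : Fin 2) := Fin.ext (show (u1 : ℕ) = 0 by omega)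
      have e2 : u2 = ⟨0, h0⟩ := h1
      rw [e1, e2] at hc; exact hc
  have : f (0, ⟨0, h0⟩) = Finset.univ := Finset.eq_univ_iff_forall.mpr hmem
  rw [this, Finset.card_univ, Fintype.card_fin]

lemma lemC1 (hf : IsKRDF 3 (pathProdAdj 2 n) f) (j : ℕ) (h : j + 1 < n)
    (h0 : colA n f (j+1) = 0) : colA n f j = 3 := by
  have hj : j < n := by omega
  unfold colA at *; rw [dif_pos h] at h0; rw [dif_pos hj]
  have hv : f (0, ⟨j+1, h⟩) = ∅ := Finset.card_eq_zero.mp h0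
  have hmem : ∀ c : Fin 3, c ∈ f (0, ⟨j, hj⟩) := by
    intro c
    obtain ⟨u, hadj, hc⟩ := hf _ hv c
    obtain ⟨u1, u2⟩ := u
    rcases hadj with ⟨h1, h2⟩ | ⟨-, h2⟩
    · have h2' : (u2 : ℕ) + 1 = j + 1 := h2
      have e1 : u1 = (0 : Fin 2) := h1
      have e2 : u2 = ⟨j, hj⟩ := Fin.ext (show (u2 : ℕ) = j by omega)
      rw [e1, e2] at hc; exact hc
    · have h2' : (u1 : ℕ) + 1 = 0 := h2
      omega
  have : f (0, ⟨j, hj⟩) = Finset.univ := Finset.eq_univ_iff_forall.mpr hmem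
  rw [this, Finset.card_univ, Fintype.card_fin]

lemma lemC2 (hf : IsKRDF 3 (pathProdAdj 2 n) f) (j : ℕ) (h : j + 1 < n)
    (h0 : colB n f (j+1) = 0) : 3 ≤ colA n f (j+1) + colB n f j := by
  have hj : j < n := by omega
  unfold colA colB at *; rw [dif_pos h] at h0 ⊢; rw [dif_pos hj]
  have hv : f (1, ⟨j+1, h⟩) = ∅ := Finset.card_eq_zero.mp h0
  have hmem : ∀ c : Fin 3, c ∈ f (0, ⟨j+1, h⟩) ∪ f (1, ⟨j, hj⟩) := by
    intro c
    obtain ⟨u, hadj, hc⟩ := hf _ hv c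
    obtain ⟨u1, u2⟩ := u
    rcases hadj with ⟨h1, h2⟩ | ⟨h1, h2⟩
    · have h2' : (u2 : ℕ) + 1 = j + 1 := h2
      have e1 : u1 = (1 : Fin 2) := h1
      have e2 : u2 = ⟨j, hj⟩ := Fin.ext (show (u2 : ℕ) = j by omega)
      rw [e1, e2] at hc; exact Finset.mem_union_right _ hc
    · have h2' : (u1 : ℕ) + 1 = 1 := h2
      have e1 : u1 = (0 : Fin 2) := Fin.ext (show (u1 : ℕ) = 0 by omega)
      have e2 : u2 = ⟨j+1, h⟩ := h1
      rw [e1, e2] at hc; exact Finset.mem_union_left _ hc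
  have hsub : (Finset.univ : Finset (Fin 3)) ⊆ f (0, ⟨j+1, h⟩) ∪ f (1, ⟨j, hj⟩) :=
    fun c _ => hmem c
  calc (3 : ℕ) = (Finset.univ : Finset (Fin 3)).card := by simp
    _ ≤ (f (0, ⟨j+1, h⟩) ∪ f (1, ⟨j, hj⟩)).card := Finset.card_le_card hsub
    _ ≤ _ := Finset.card_union_le _ _


lemma card_pos_of_ne {g : Finset (Fin 3)} (h : g ≠ ∅) : 1 ≤ g.card :=
  Finset.card_pos.mpr (Finset.nonempty_iff_ne_empty.mpr h)

lemma lemT0 (hf : IsTkRDF 3 (pathProdAdj 2 n) f) (j : ℕ) (h : j + 1 < n)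
    (h1 : 1 ≤ colA n f (j+1)) :
    1 ≤ colB n f (j+1) ∨ 1 ≤ colA n f j ∨ (j + 2 < n ∧ 1 ≤ colA n f (j+2)) := by
  have hj : j < n := by omega
  unfold colA colB at *
  rw [dif_pos h] at h1
  have hv : f (0, ⟨j+1, h⟩) ≠ ∅ :=
    (Finset.card_pos.mp h1).ne_empty
  obtain ⟨u, -, hUne, hadj⟩ := hf.2 _ hv
  obtain ⟨u1, u2⟩ := u
  have hcard : 1 ≤ (f (u1, u2)).card := card_pos_of_ne hUne
  rcases hadj with (⟨e1, e2⟩ | ⟨e1, e2⟩) | (⟨e1, e2⟩ | ⟨e1, e2⟩)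
  · -- Adj u v, column arc: u = (0, j)
    have e2' : (u2 : ℕ) + 1 = j + 1 := e2
    have f1 : u1 = (0 : Fin 2) := e1
    have f2 : u2 = ⟨j, hj⟩ := Fin.ext (show (u2 : ℕ) = j by omega)
    rw [f1, f2] at hcard
    refine Or.inr (Or.inl ?_); rw [dif_pos hj]; exact hcard
  · -- Adj u v, row arc: impossible
    have e2' : (u1 : ℕ) + 1 = 0 := e2
    omega
  · -- Adj v u, column arc: u = (0, j+2)
    have e2' : (j : ℕ) + 1 + 1 = (u2 : ℕ) := e2
    have hlt : j + 2 < n := by have := u2.isLt; omega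
    have f1 : u1 = (0 : Fin 2) := e1.symm
    have f2 : u2 = ⟨j+2, hlt⟩ := Fin.ext (show (u2 : ℕ) = j + 2 by omega)
    rw [f1, f2] at hcard
    refine Or.inr (Or.inr ⟨hlt, ?_⟩); rw [dif_pos hlt]; exact hcard
  · -- Adj v u, row arc: u = (1, j+1)
    have e2' : (0 : ℕ) + 1 = (u1 : ℕ) := e2
    have f1 : u1 = (1 : Fin 2) := Fin.ext (show (u1 : ℕ) = 1 by omega)
    have f2 : u2 = ⟨j+1, h⟩ := e1.symm
    rw [f1, f2] at hcard
    refine Or.inl ?_; rw [dif_pos h]; exact hcard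

lemma lemT0z (hf : IsTkRDF 3 (pathProdAdj 2 n) f) (h0 : 0 < n)
    (h1 : 1 ≤ colA n f 0) : 1 ≤ colB n f 0 ∨ (1 < n ∧ 1 ≤ colA n f 1) := by
  unfold colA colB at *
  rw [dif_pos h0] at h1
  have hv : f (0, ⟨0, h0⟩) ≠ ∅ := (Finset.card_pos.mp h1).ne_empty
  obtain ⟨u, -, hUne, hadj⟩ := hf.2 _ hv
  obtain ⟨u1, u2⟩ := u
  have hcard : 1 ≤ (f (u1, u2)).card := card_pos_of_ne hUne
  rcases hadj with (⟨e1, e2⟩ | ⟨e1, e2⟩) | (⟨e1, e2⟩ | ⟨e1, e2⟩)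
  · have e2' : (u2 : ℕ) + 1 = 0 := e2
    omega
  · have e2' : (u1 : ℕ) + 1 = 0 := e2
    omega
  · have e2' : (0 : ℕ) + 1 = (u2 : ℕ) := e2
    have hlt : 1 < n := by have := u2.isLt; omega
    have f1 : u1 = (0 : Fin 2) := e1.symm
    have f2 : u2 = ⟨1, hlt⟩ := Fin.ext (show (u2 : ℕ) = 1 by omega)
    rw [f1, f2] at hcard
    refine Or.inr ⟨hlt, ?_⟩; rw [dif_pos hlt]; exact hcard
  · have e2' : (0 : ℕ) + 1 = (u1 : ℕ) := e2
    have f1 : u1 = (1 : Fin 2) := Fin.ext (show (u1 : ℕ) = 1 by omega)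
    have f2 : u2 = ⟨0, h0⟩ := e1.symm
    rw [f1, f2] at hcard
    refine Or.inl ?_; rw [dif_pos h0]; exact hcard

lemma lemT1 (hf : IsTkRDF 3 (pathProdAdj 2 n) f) (j : ℕ) (h : j + 1 < n)
    (h1 : 1 ≤ colB n f (j+1)) :
    1 ≤ colA n f (j+1) ∨ 1 ≤ colB n f j ∨ (j + 2 < n ∧ 1 ≤ colB n f (j+2)) := by
  have hj : j < n := by omega
  unfold colA colB at *
  rw [dif_pos h] at h1
  have hv : f (1, ⟨j+1, h⟩) ≠ ∅ := (Finset.card_pos.mp h1).ne_empty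
  obtain ⟨u, -, hUne, hadj⟩ := hf.2 _ hv
  obtain ⟨u1, u2⟩ := u
  have hcard : 1 ≤ (f (u1, u2)).card := card_pos_of_ne hUne
  rcases hadj with (⟨e1, e2⟩ | ⟨e1, e2⟩) | (⟨e1, e2⟩ | ⟨e1, e2⟩)
  · -- Adj u v, column arc: u = (1, j)
    have e2' : (u2 : ℕ) + 1 = j + 1 := e2
    have f1 : u1 = (1 : Fin 2) := e1
    have f2 : u2 = ⟨j, hj⟩ := Fin.ext (show (u2 : ℕ) = j by omega)
    rw [f1, f2] at hcard
    refine Or.inr (Or.inl ?_); rw [dif_pos hj]; exact hcard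
  · -- Adj u v, row arc: u = (0, j+1)
    have e2' : (u1 : ℕ) + 1 = 1 := e2
    have f1 : u1 = (0 : Fin 2) := Fin.ext (show (u1 : ℕ) = 0 by omega)
    have f2 : u2 = ⟨j+1, h⟩ := e1
    rw [f1, f2] at hcard
    refine Or.inl ?_; rw [dif_pos h]; exact hcard
  · -- Adj v u, column arc: u = (1, j+2)
    have e2' : (j : ℕ) + 1 + 1 = (u2 : ℕ) := e2
    have hlt : j + 2 < n := by have := u2.isLt; omega
    have f1 : u1 = (1 : Fin 2) := e1.symm
    have f2 : u2 = ⟨j+2, hlt⟩ := Fin.ext (show (u2 : ℕ) = j + 2 by omega)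
    rw [f1, f2] at hcard
    refine Or.inr (Or.inr ⟨hlt, ?_⟩); rw [dif_pos hlt]; exact hcard
  · -- Adj v u, row arc: impossible
    have e2' : (1 : ℕ) + 1 = (u1 : ℕ) := e2
    have := u1.isLt
    omega

lemma lemT1z (hf : IsTkRDF 3 (pathProdAdj 2 n) f) (h0 : 0 < n)
    (h1 : 1 ≤ colB n f 0) : 1 ≤ colA n f 0 ∨ (1 < n ∧ 1 ≤ colB n f 1) := by
  unfold colA colB at *
  rw [dif_pos h0] at h1
  have hv : f (1, ⟨0, h0⟩) ≠ ∅ := (Finset.card_pos.mp h1).ne_empty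
  obtain ⟨u, -, hUne, hadj⟩ := hf.2 _ hv
  obtain ⟨u1, u2⟩ := u
  have hcard : 1 ≤ (f (u1, u2)).card := card_pos_of_ne hUne
  rcases hadj with (⟨e1, e2⟩ | ⟨e1, e2⟩) | (⟨e1, e2⟩ | ⟨e1, e2⟩)
  · have e2' : (u2 : ℕ) + 1 = 0 := e2
    omega
  · have e2' : (u1 : ℕ) + 1 = 1 := e2
    have f1 : u1 = (0 : Fin 2) := Fin.ext (show (u1 : ℕ) = 0 by omega)
    have f2 : u2 = ⟨0, h0⟩ := e1
    rw [f1, f2] at hcard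
    refine Or.inl ?_; rw [dif_pos h0]; exact hcard
  · have e2' : (0 : ℕ) + 1 = (u2 : ℕ) := e2
    have hlt : 1 < n := by have := u2.isLt; omega
    have f1 : u1 = (1 : Fin 2) := e1.symm
    have f2 : u2 = ⟨1, hlt⟩ := Fin.ext (show (u2 : ℕ) = 1 by omega)
    rw [f1, f2] at hcard
    refine Or.inr ⟨hlt, ?_⟩; rw [dif_pos hlt]; exact hcard
  · have e2' : (1 : ℕ) + 1 = (u1 : ℕ) := e2
    have := u1.isLt
    omega

end Lemmas

lemma sum_cols (n : ℕ) (f : Fin 2 × Fin n → Finset (Fin 3)) :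
    ∑ v, (f v).card = ∑ j ∈ Finset.range n, (colA n f j + colB n f j) := by
  rw [Fintype.sum_prod_type, Fin.sum_univ_two, Finset.sum_add_distrib]
  congr 1
  · rw [← Fin.sum_univ_eq_sum_range (fun j => colA n f j) n]
    apply Finset.sum_congr rfl
    intro i _
    simp only [colA, i.isLt, dif_pos, Fin.eta]
  · rw [← Fin.sum_univ_eq_sum_range (fun j => colB n f j) n]
    apply Finset.sum_congr rfl
    intro i _
    simp only [colB, i.isLt, dif_pos, Fin.eta]

lemma upper_f (n : ℕ) (hn : 2 ≤ n) :
    IsTkRDF 3 (pathProdAdj 2 n) (fun _ => ({0} : Finset (Fin 3))) := by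
  constructor
  · intro v hv
    exact absurd hv (Finset.singleton_ne_empty _)
  · intro v _
    obtain ⟨i, j⟩ := v
    fin_cases i
    · refine ⟨((1 : Fin 2), j), ?_, Finset.singleton_ne_empty _, Or.inr (Or.inr ⟨rfl, rfl⟩)⟩
      simp [Prod.ext_iff]
    · refine ⟨((0 : Fin 2), j), ?_, Finset.singleton_ne_empty _, Or.inl (Or.inr ⟨rfl, rfl⟩)⟩
      simp [Prod.ext_iff]

lemma upper_sum (n : ℕ) :
    ∑ _v : Fin 2 × Fin n, (({0} : Finset (Fin 3))).card = 2 * n := by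
  simp [Finset.card_univ]

lemma col_ind (n : ℕ) (hn : 2 ≤ n) (A B : ℕ → ℕ)
    (hA3 : ∀ j, A j ≤ 3) (hB3 : ∀ j, B j ≤ 3)
    (hA0 : 1 ≤ A 0) (hB0 : B 0 = 0 → 3 ≤ A 0)
    (hC1 : ∀ j, j + 1 < n → A (j+1) = 0 → A j = 3)
    (hC2 : ∀ j, j + 1 < n → B (j+1) = 0 → 3 ≤ A (j+1) + B j)
    (hT0 : ∀ j, j + 1 < n → 1 ≤ A (j+1) →
      1 ≤ B (j+1) ∨ 1 ≤ A j ∨ (j + 2 < n ∧ 1 ≤ A (j+2)))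
    (hT0z : 1 ≤ A 0 → 1 ≤ B 0 ∨ (1 < n ∧ 1 ≤ A 1))
    (hT1 : ∀ j, j + 1 < n → 1 ≤ B (j+1) →
      1 ≤ A (j+1) ∨ 1 ≤ B j ∨ (j + 2 < n ∧ 1 ≤ B (j+2)))
    (hT1z : 1 ≤ B 0 → 1 ≤ A 0 ∨ (1 < n ∧ 1 ≤ B 1)) :
    2 * n ≤ ∑ j ∈ Finset.range n, (A j + B j) := by
  have claim : ∀ j, j + 2 ≤ n →
      2 * (j + 2) + Phi (A j) (B j) (A (j+1)) (B (j+1)) ≤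
        ∑ i ∈ Finset.range (j+2), (A i + B i) := by
    intro j
    induction j with
    | zero =>
      intro h
      have h4 : 1 ≤ A 0 → 1 ≤ B 0 ∨ 1 ≤ A 1 := by
        intro h'; rcases hT0z h' with h'' | h''
        · exact Or.inl h''
        · exact Or.inr h''.2
      have h5 : 1 ≤ B 0 → 1 ≤ A 0 ∨ 1 ≤ B 1 := by
        intro h'; rcases hT1z h' with h'' | h''
        · exact Or.inl h''
        · exact Or.inr h''.2
      have hb := phi_base (A 0) (B 0) (A 1) (B 1) (hA3 0) (hB3 0) (hA3 1) (hB3 1)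
        hA0 hB0 (hC1 0 (by omega)) (hC2 0 (by omega)) h4 h5
      show 2 * 2 + Phi (A 0) (B 0) (A 1) (B 1) ≤ ∑ i ∈ Finset.range 2, (A i + B i)
      rw [Finset.sum_range_succ, Finset.sum_range_one]
      omega
    | succ j ih =>
      intro h
      have ihh := ih (by omega)
      have h3 : 1 ≤ A (j+1) → 1 ≤ B (j+1) ∨ 1 ≤ A j ∨ 1 ≤ A (j+2) := by
        intro h'; rcases hT0 j (by omega) h' with h'' | h'' | h''
        · exact Or.inl h''
        · exact Or.inr (Or.inl h'')
        · exact Or.inr (Or.inr h''.2)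
      have h4 : 1 ≤ B (j+1) → 1 ≤ A (j+1) ∨ 1 ≤ B j ∨ 1 ≤ B (j+2) := by
        intro h'; rcases hT1 j (by omega) h' with h'' | h'' | h''
        · exact Or.inl h''
        · exact Or.inr (Or.inl h'')
        · exact Or.inr (Or.inr h''.2)
      have hk := phi_step (A j) (B j) (A (j+1)) (B (j+1)) (A (j+2)) (B (j+2))
        (hA3 _) (hB3 _) (hA3 _) (hB3 _) (hA3 _) (hB3 _)
        (hC1 (j+1) (by omega)) (hC2 (j+1) (by omega)) h3 h4
      show 2 * (j + 3) + Phi (A (j+1)) (B (j+1)) (A (j+2)) (B (j+2)) ≤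
        ∑ i ∈ Finset.range (j+3), (A i + B i)
      rw [Finset.sum_range_succ]
      omega
  obtain ⟨m, rfl⟩ : ∃ m, n = m + 2 := ⟨n - 2, by omega⟩
  have := claim m (le_refl _)
  omega


theorem tr3_P2_Pn (n : ℕ) (hn : 2 ≤ n) :
    tkRainbow 3 (pathProdAdj 2 n) = 2 * n := by
  have hmem : 2 * n ∈ {w | ∃ f : Fin 2 × Fin n → Finset (Fin 3),
      IsTkRDF 3 (pathProdAdj 2 n) f ∧ ∑ v, (f v).card = w} :=
    ⟨fun _ => {0}, upper_f n hn, upper_sum n⟩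
  have hlow : ∀ w ∈ {w | ∃ f : Fin 2 × Fin n → Finset (Fin 3),
      IsTkRDF 3 (pathProdAdj 2 n) f ∧ ∑ v, (f v).card = w}, 2 * n ≤ w := by
    rintro w ⟨f, hf, rfl⟩
    rw [sum_cols]
    exact col_ind n hn (colA n f) (colB n f) (fun j => colA_le3 j) (fun j => colB_le3 j)
      (lemA0 hf.1 (by omega)) (fun hb => lemB0 hf.1 (by omega) hb)
      (fun j h h0 => lemC1 hf.1 j h h0) (fun j h h0 => lemC2 hf.1 j h h0)
      (fun j h h1 => lemT0 hf j h h1) (fun h1 => lemT0z hf (by omega) h1)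
      (fun j h h1 => lemT1 hf j h h1) (fun h1 => lemT1z hf (by omega) h1)
  unfold tkRainbow
  exact le_antisymm (Nat.sInf_le hmem) (le_csInf ⟨2 * n, hmem⟩ hlow)
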